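/- arXiv:2302.06248 — 3 statements merged into one kernel-verified Lean document; each statement's English description precedes it below -/
import Mathlib

section
/- The language Q of all primitive words over the alphabet {a,b} is not regular. -/
/-- The two-letter alphabet {a, b}. -/
inductive AB : Type
  | a : AB
  | b : AB

/-- The `m`-th power of a word `u`. -/
def wpow {α : Type*} (u : List α) (m : ℕ) : List α := (List.replicate m u).flatten

/-- A word is primitive if `w = u^m` implies `m = 1`. -/
def Primitive {α : Type*} (w : List α) : Prop :=
  ∀ (u : List α) (m : ℕ), w = wpow u m → m = 1

/-!
By the Myhill–Nerode theorem it suffices to exhibit infinitely many distinct left quotients of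
the language of primitive words. The words `aⁱb` provide them: `aʲb` lies in the quotient by
`aⁱb` exactly when `i ≠ j`, because `aⁱbaʲb` is primitive for `i ≠ j`, whereas a square `uu`
never is.
-/

open List

variable {α : Type*}

theorem wpow_two (u : List α) : wpow u 2 = u ++ u := by
  simp [wpow]

theorem count_wpow [BEq α] (c : α) (u : List α) (m : ℕ) :
    (wpow u m).count c = m * u.count c := by
  simp [wpow, count_flatten, sum_replicate]

theorem not_primitive_append_self (u : List α) : ¬ Primitive (u ++ u) :=
  fun h => absurd (h u 2 (wpow_two u).symm) (by decide)

theorem append_cons_inj_of_notMem [DecidableEq α] {b : α} {l l' t t' : List α}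
    (hl : b ∉ l) (hl' : b ∉ l') (h : l ++ b :: t = l' ++ b :: t') : l = l' ∧ t = t' := by
  have hidx := congrArg (idxOf b) h
  simp only [idxOf_append_of_notMem hl, idxOf_append_of_notMem hl', idxOf_cons_self] at hidx
  simpa using append_inj h (by simpa using hidx)

theorem primitive_replicate_append_replicate {a b : α} (hab : a ≠ b) {i j : ℕ} (hij : i ≠ j) :
    Primitive (replicate i a ++ b :: (replicate j a ++ [b])) := by
  classical
  intro u m hw
  have hb_replicate : ∀ n, b ∉ replicate n a := fun _ hb => hab (eq_of_mem_replicate hb).symm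
  have hcount : m * u.count b = 2 := by
    rw [← count_wpow, ← hw]
    simp [count_replicate, hab]
  rcases (Nat.dvd_prime Nat.prime_two).1 ⟨_, hcount.symm⟩ with hm | rfl
  · exact hm
  exfalso
  obtain ⟨x, y, rfl⟩ := append_of_mem (count_pos_iff.1 (by omega : 0 < u.count b))
  have hxy : x.count b + (y.count b + 1) = 1 := by
    simpa [count_append, count_cons] using hcount
  have hx : b ∉ x := count_eq_zero.1 (by omega)
  have hy : b ∉ y := count_eq_zero.1 (by omega)
  -- `aⁱbaʲb = xbyxby` with no `b` in `x`, `y`; matching `b`s gives `x = aⁱ`, `y = []`, `x = aʲ`.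
  rw [wpow_two, append_assoc, cons_append] at hw
  obtain ⟨hxi, hrest⟩ := append_cons_inj_of_notMem (hb_replicate i) hx hw
  obtain ⟨hyx, rfl⟩ := append_cons_inj_of_notMem (t := []) (l' := y ++ x) (hb_replicate j)
    (by simp [hx, hy]) (by simpa using hrest)
  exact hij (replicate_left_injective a (hxi.trans (by simpa using hyx.symm)))

theorem injective_leftQuotient_primitive {a b : α} (hab : a ≠ b) :
    Function.Injective fun n =>
      Language.leftQuotient ({w | Primitive w} : Language α) (replicate n a ++ [b]) := by
  intro i j hij
  by_contra hne
  have hmem : replicate j a ++ [b] ∈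
      Language.leftQuotient ({w | Primitive w} : Language α) (replicate i a ++ [b]) := by
    show Primitive (_ ++ _)
    simpa using primitive_replicate_append_replicate hab hne
  dsimp only at hij
  rw [hij] at hmem
  exact not_primitive_append_self _ hmem

theorem not_isRegular_primitive {a b : α} (hab : a ≠ b) :
    ¬ Language.IsRegular ({w | Primitive w} : Language α) := fun hreg =>
  Set.infinite_range_of_injective (injective_leftQuotient_primitive hab)
    (hreg.finite_range_leftQuotient.subset (Set.range_subset_iff.2 fun _ => ⟨_, rfl⟩))

/-- The language of all primitive words over {a,b} is not regular. -/
theorem stmt_1 : ¬ Language.IsRegular ({w | Primitive w} : Language AB) :=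
  not_isRegular_primitive (show AB.a ≠ AB.b from nofun)
end

section
/- The language of all square-free words over an alphabet Σ with |Σ| ≥ 3 is not context-free, assuming it is infinite. -/
/-!
Let `m` bound the lengths of the right-hand sides of a grammar. In a parse tree whose yield is
longer than `m ^ d`, descending towards a child with a long yield passes `d + 1` nonterminals at
which the yield strictly shrinks. When `d` is the number of rules, two of them coincide, say `A`:
then `S ⇒* u A y`, `A ⇒* v A x` with `v x` nonempty and `A ⇒* z`, so `u v v z x x y` lies in
the language and contains the square `v v` or `x x`. An infinite context-free language has
arbitrarily long words, because only the finitely many terminals occurring in rules appear in them.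
-/

open ContextFreeGrammar

inductive ParseTree (T N : Type*)
  | leaf (t : T)
  | node (n : N) (c : List (ParseTree T N))

namespace ParseTree

variable {T N : Type*}

@[simp] def root : ParseTree T N → Symbol T N
  | leaf t => .terminal t
  | node n _ => .nonterminal n

def yield : ParseTree T N → List T
  | leaf t => [t]
  | node _ c => (c.map yield).flatten

end ParseTree

lemma List.exists_length_gt_of_mul_lt_length_flatten {α : Type*} {L : List (List α)} {m k : ℕ}
    (hL : L.length ≤ m) (h : m * k < L.flatten.length) : ∃ l ∈ L, k < l.length := by
  by_contra! hle
  have : L.flatten.length ≤ L.length * k := by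
    simpa [List.length_flatten] using
      List.sum_le_card_nsmul (L.map List.length) k (by simpa using hle)
  nlinarith

namespace ContextFreeGrammar

variable {T : Type*} {g : ContextFreeGrammar T}

inductive IsParseTree (g : ContextFreeGrammar T) : ParseTree T g.NT → Prop
  | leaf (t : T) : IsParseTree g (.leaf t)
  | node {r : ContextFreeRule T g.NT} (hr : r ∈ g.rules) {c : List (ParseTree T g.NT)}
      (hc : ∀ q ∈ c, IsParseTree g q) (hout : c.map ParseTree.root = r.output) :
      IsParseTree g (.node r.input c)

lemma Derives.append {u u' v v' : List (Symbol T g.NT)} (h : g.Derives u v)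
    (h' : g.Derives u' v') : g.Derives (u ++ u') (v ++ v') :=
  (h.append_right u').trans (h'.append_left v)

lemma Derives.trans_mid {u p q z : List (Symbol T g.NT)} {s : Symbol T g.NT}
    (h : g.Derives u (p ++ [s] ++ q)) (h' : g.Derives [s] z) : g.Derives u (p ++ z ++ q) :=
  h.trans (((Derives.refl p).append h').append (Derives.refl q))

lemma derives_map_yield {c : List (ParseTree T g.NT)}
    (hc : ∀ q ∈ c, g.Derives [q.root] (q.yield.map .terminal)) :
    g.Derives (c.map ParseTree.root) ((c.map ParseTree.yield).flatten.map .terminal) := by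
  induction c with
  | nil => exact Derives.refl []
  | cons q c ih =>
    simpa using (hc q (by simp)).append (ih fun q' hq' => hc q' (by simp [hq']))

lemma IsParseTree.derives_yield {p : ParseTree T g.NT} (hp : g.IsParseTree p) :
    g.Derives [p.root] (p.yield.map .terminal) := by
  induction hp with
  | leaf t =>
    rw [ParseTree.yield]
    exact Derives.refl _
  | node hr _ hout ih =>
    rw [ParseTree.yield, ParseTree.root]
    refine Produces.trans_derives ⟨_, hr, ?_⟩ (derives_map_yield ih)
    rw [hout]
    exact ContextFreeRule.Rewrites.input_output

lemma exists_parseTrees_of_derives {s : List (Symbol T g.NT)} {w : List T}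
    (h : g.Derives s (w.map .terminal)) :
    ∃ c : List (ParseTree T g.NT), (∀ q ∈ c, g.IsParseTree q) ∧
      c.map ParseTree.root = s ∧ (c.map ParseTree.yield).flatten = w := by
  induction h using Relation.ReflTransGen.head_induction_on with
  | refl =>
    refine ⟨w.map .leaf, ?_, ?_, ?_⟩
    · simpa using fun t _ => IsParseTree.leaf t
    · simp [Function.comp_def]
    · simp [Function.comp_def, ParseTree.yield, ← List.flatMap_def]
  | head hp _ ih =>
    obtain ⟨r, hr, hrw⟩ := hp
    obtain ⟨p, q, rfl, rfl⟩ := hrw.exists_parts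
    obtain ⟨c, hc, hroot, rfl⟩ := ih
    rw [List.append_assoc] at hroot
    obtain ⟨c₁, c₂₃, rfl, rfl, hc₂₃⟩ := List.map_eq_append_iff.mp hroot
    obtain ⟨c₂, c₃, rfl, hc₂, rfl⟩ := List.map_eq_append_iff.mp hc₂₃
    refine ⟨c₁ ++ [.node r.input c₂] ++ c₃, ?_, by simp, by simp [ParseTree.yield]⟩
    simp only [List.append_assoc, List.mem_append, List.mem_singleton] at hc ⊢
    rintro q (hq | rfl | hq)
    · exact hc q (.inl hq)
    · exact .node hr (fun q hq => hc q (.inr (.inl hq))) hc₂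
    · exact hc q (.inr (.inr hq))

lemma exists_parseTree_of_mem_language {w : List T} (hw : w ∈ g.language) :
    ∃ p : ParseTree T g.NT,
      g.IsParseTree p ∧ p.root = .nonterminal g.initial ∧ p.yield = w := by
  obtain ⟨c, hc, hroot, rfl⟩ := exists_parseTrees_of_derives hw
  obtain ⟨p, rfl⟩ := List.length_eq_one_iff.mp (by simpa using congrArg List.length hroot)
  exact ⟨p, hc p (by simp), by simpa using hroot, by simp⟩

lemma IsParseTree.derives_child {A : g.NT} {c : List (ParseTree T g.NT)} {q : ParseTree T g.NT}
    (hp : g.IsParseTree (.node A c)) (hq : q ∈ c) :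
    ∃ u y : List T,
      g.Derives [.nonterminal A] (u.map .terminal ++ [q.root] ++ y.map .terminal) ∧
      (ParseTree.node A c).yield = u ++ q.yield ++ y := by
  obtain ⟨c₁, c₂, rfl⟩ := List.append_of_mem hq
  cases hp with
  | @node r hr _ hc hout =>
    have hprod : g.Produces [.nonterminal r.input]
        (c₁.map ParseTree.root ++ [q.root] ++ c₂.map ParseTree.root) :=
      ⟨r, hr, by convert ContextFreeRule.Rewrites.input_output using 1; simpa using hout⟩
    have hc' : ∀ q' ∈ c₁ ++ q :: c₂, g.Derives [q'.root] (q'.yield.map .terminal) :=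
      fun q' hq' => (hc q' hq').derives_yield
    refine ⟨(c₁.map ParseTree.yield).flatten, (c₂.map ParseTree.yield).flatten,
      hprod.trans_derives ?_, by simp [ParseTree.yield]⟩
    exact ((derives_map_yield fun q' hq' => hc' q' (by simp [hq'])).append
      (Derives.refl [q.root])).append (derives_map_yield fun q' hq' => hc' q' (by simp [hq']))

def Encloses (g : ContextFreeGrammar T) (A B : g.NT) : Prop :=
  ∃ v x : List T, v ++ x ≠ [] ∧
    g.Derives [.nonterminal A] (v.map .terminal ++ [.nonterminal B] ++ x.map .terminal)

def Reaches (g : ContextFreeGrammar T) (s : Symbol T g.NT) (A : g.NT) : Prop :=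
  ∃ u y : List T, g.Derives [s] (u.map .terminal ++ [.nonterminal A] ++ y.map .terminal)

def Productive (g : ContextFreeGrammar T) (A : g.NT) : Prop :=
  ∃ w : List T, g.Derives [.nonterminal A] (w.map .terminal)

lemma Reaches.trans {s s' : Symbol T g.NT} {A : g.NT} {u y : List T}
    (h : g.Derives [s] (u.map .terminal ++ [s'] ++ y.map .terminal)) (h' : g.Reaches s' A) :
    g.Reaches s A := by
  obtain ⟨u', y', h'⟩ := h'
  exact ⟨u ++ u', y' ++ y, by simpa using h.trans_mid h'⟩

lemma Productive.exists_rule {A : g.NT} (h : g.Productive A) : ∃ r ∈ g.rules, r.input = A := by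
  obtain ⟨w, hw⟩ := h
  rcases hw.eq_or_head with hw | ⟨v, hv, -⟩
  · cases w <;> simp at hw
  · obtain ⟨r, hr, hA⟩ := hv.exists_nonterminal_input_mem
    exact ⟨r, hr, by simpa using hA⟩

lemma IsParseTree.exists_enclosing_chain {m : ℕ} (hm : ∀ r ∈ g.rules, r.output.length ≤ m)
    (hm0 : 0 < m) {p : ParseTree T g.NT} (hp : g.IsParseTree p) (d : ℕ)
    (hlen : m ^ d < p.yield.length) :
    ∃ l : List g.NT, l.length = d + 1 ∧ l.Pairwise g.Encloses ∧
      ∀ A ∈ l, g.Reaches p.root A ∧ g.Productive A := by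
  induction hp generalizing d with
  | leaf t => simp [ParseTree.yield] at hlen; omega
  | @node r hr c hc hout ih =>
    have hp : g.IsParseTree (.node r.input c) := .node hr hc hout
    have hroot : g.Reaches (.nonterminal r.input) r.input ∧ g.Productive r.input :=
      ⟨⟨[], [], by simpa using Derives.refl _⟩, _, hp.derives_yield⟩
    cases d with
    | zero => exact ⟨[r.input], rfl, List.pairwise_singleton _ _, by simpa using hroot⟩
    | succ d =>
      have hcm : (c.map ParseTree.yield).length ≤ m := by
        simpa [← hout] using hm r hr
      have hlen' : m * m ^ d < (c.map ParseTree.yield).flatten.length := by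
        rwa [ParseTree.yield, pow_succ'] at hlen
      obtain ⟨_, hq', hqlen⟩ := List.exists_length_gt_of_mul_lt_length_flatten hcm hlen'
      obtain ⟨q, hq, rfl⟩ := List.mem_map.mp hq'
      obtain ⟨u, y, hder, hyield⟩ := hp.derives_child hq
      -- `r.input` joins the chain only if the yield strictly shrinks at `q`.
      by_cases huy : u ++ y = []
      · obtain ⟨rfl, rfl⟩ := List.append_eq_nil_iff.mp huy
        obtain ⟨l, hl, hpw, hmem⟩ := ih q hq (d + 1) (by simpa [hyield] using hlen)
        exact ⟨l, hl, hpw, fun A hA => (hmem A hA).imp_left (Reaches.trans hder)⟩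
      · obtain ⟨l, hl, hpw, hmem⟩ := ih q hq d hqlen
        refine ⟨r.input :: l, by simp [hl],
          List.pairwise_cons.mpr ⟨fun A hA => ?_, hpw⟩, ?_⟩
        · obtain ⟨u', y', h'⟩ := (hmem A hA).1
          exact ⟨u ++ u', y' ++ y, by simp_all, by simpa using hder.trans_mid h'⟩
        · exact List.forall_mem_cons.mpr
            ⟨hroot, fun A hA => (hmem A hA).imp_left (Reaches.trans hder)⟩

theorem exists_pumping_of_mem_language {m : ℕ} (hm : ∀ r ∈ g.rules, r.output.length ≤ m)
    (hm0 : 0 < m) {w : List T} (hw : w ∈ g.language) (hlen : m ^ g.rules.card < w.length) :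
    ∃ (A : g.NT) (u v z x y : List T), v ++ x ≠ [] ∧
      g.Derives [.nonterminal g.initial]
        (u.map .terminal ++ [.nonterminal A] ++ y.map .terminal) ∧
      g.Derives [.nonterminal A] (v.map .terminal ++ [.nonterminal A] ++ x.map .terminal) ∧
      g.Derives [.nonterminal A] (z.map .terminal) := by
  classical
  obtain ⟨p, hp, hroot, rfl⟩ := exists_parseTree_of_mem_language hw
  obtain ⟨l, hl, hpw, hmem⟩ := hp.exists_enclosing_chain hm hm0 _ hlen
  have hdup : ¬ l.Nodup := fun hnd => by
    have hsub : l.toFinset ⊆ g.rules.image ContextFreeRule.input := fun A hA => by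
      simpa using (hmem A (List.mem_toFinset.mp hA)).2.exists_rule
    have := (Finset.card_le_card hsub).trans Finset.card_image_le
    rw [List.toFinset_card_of_nodup hnd, hl] at this
    omega
  obtain ⟨A, hAA⟩ : ∃ A, List.Sublist [A, A] l := by simpa [List.nodup_iff_sublist] using hdup
  obtain ⟨v, x, hvx, hAvx⟩ := List.pairwise_pair.mp (hpw.sublist hAA)
  obtain ⟨⟨u, y, hAuy⟩, z, hz⟩ := hmem A (hAA.subset (by simp))
  rw [hroot] at hAuy
  exact ⟨A, u, v, z, x, y, hvx, hAuy, hAvx, hz⟩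

lemma derives_pump {A : g.NT} {v x : List T}
    (h : g.Derives [.nonterminal A] (v.map .terminal ++ [.nonterminal A] ++ x.map .terminal))
    (n : ℕ) :
    g.Derives [.nonterminal A] ((List.replicate n v).flatten.map .terminal ++ [.nonterminal A] ++
      (List.replicate n x).flatten.map .terminal) := by
  induction n with
  | zero => simpa using Derives.refl _
  | succ n ih =>
    have hx : (List.replicate (n + 1) x).flatten = (List.replicate n x).flatten ++ x := by
      rw [List.replicate_succ', List.flatten_append, List.flatten_singleton]
    rw [List.replicate_succ, List.flatten_cons, hx]
    simpa using h.trans_mid ih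

theorem pump_mem_language {A : g.NT} {u v z x y : List T}
    (h₁ : g.Derives [.nonterminal g.initial]
      (u.map .terminal ++ [.nonterminal A] ++ y.map .terminal))
    (h₂ : g.Derives [.nonterminal A] (v.map .terminal ++ [.nonterminal A] ++ x.map .terminal))
    (h₃ : g.Derives [.nonterminal A] (z.map .terminal)) (n : ℕ) :
    u ++ (List.replicate n v).flatten ++ z ++ (List.replicate n x).flatten ++ y ∈ g.language := by
  have h := h₁.trans_mid ((derives_pump h₂ n).trans_mid h₃)
  simpa [mem_language_iff, Generates] using h

lemma mem_or_mem_output_of_derives {u v : List (Symbol T g.NT)} (h : g.Derives u v)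
    {s : Symbol T g.NT} (hs : s ∈ v) : s ∈ u ∨ ∃ r ∈ g.rules, s ∈ r.output := by
  induction h with
  | refl => exact .inl hs
  | tail _ hp ih =>
    obtain ⟨r, hr, hrw⟩ := hp
    obtain ⟨p, q, rfl, rfl⟩ := hrw.exists_parts
    simp only [List.mem_append] at hs
    rcases hs with (hs | hs) | hs
    · exact ih (by simp [hs])
    · exact .inr ⟨r, hr, hs⟩
    · exact ih (by simp [hs])

lemma exists_mem_language_length_gt (hinf : (g.language : Set (List T)).Infinite) (n : ℕ) :
    ∃ w ∈ g.language, n < w.length := by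
  by_contra! hshort
  let S : Set T := ⋃ r ∈ g.rules, {t | Symbol.terminal t ∈ r.output}
  have : Finite S := Set.Finite.biUnion g.rules.finite_toSet fun r _ =>
    r.output.finite_toSet.preimage (Set.injOn_of_injective fun _ _ => Symbol.terminal.inj)
  have hS : ∀ w ∈ g.language, ∀ t ∈ w, t ∈ S := fun w hw t ht => by
    rcases mem_or_mem_output_of_derives hw (List.mem_map_of_mem (f := Symbol.terminal) ht) with
      h | ⟨r, hr, h⟩
    · simp at h
    · exact Set.mem_biUnion hr h
  refine hinf (((List.finite_length_le S n).image (List.map Subtype.val)).subset fun w hw => ?_)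
  exact ⟨w.attach.map fun t => ⟨t.1, hS w hw t.1 t.2⟩, by simpa using hshort w hw, by simp⟩

end ContextFreeGrammar

theorem stmt_17_general (α : Type)
    (hinf : Set.Infinite
      ({w | ¬ ∃ (x p s : List α), x ≠ [] ∧ w = p ++ x ++ x ++ s} : Set (List α))) :
    ¬ Language.IsContextFree
      ({w | ¬ ∃ (x p s : List α), x ≠ [] ∧ w = p ++ x ++ x ++ s} : Language α) := by
  rintro ⟨g, hg⟩
  obtain ⟨m, hm⟩ : ∃ m, ∀ r ∈ g.rules, r.output.length ≤ m :=
    ⟨_, fun r hr => Finset.le_sup (f := fun r => r.output.length) hr⟩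
  obtain ⟨w, hw, hlen⟩ := exists_mem_language_length_gt (hg ▸ hinf) ((m + 1) ^ g.rules.card)
  obtain ⟨A, u, v, z, x, y, hvx, h₁, h₂, h₃⟩ :=
    exists_pumping_of_mem_language (fun r hr => (hm r hr).trans m.le_succ) m.succ_pos hw hlen
  have hsq := pump_mem_language h₁ h₂ h₃ 2
  rw [hg] at hsq
  apply hsq
  by_cases hv : v = []
  · exact ⟨x, u ++ v ++ v ++ z, y, by simp_all, by simp⟩
  · exact ⟨v, u, z ++ x ++ x ++ y, hv, by simp⟩

/-- The language of all square-free words over an alphabet with at least three letters,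
assuming it is infinite, is not context-free. -/
theorem stmt_17 (α : Type) (h3 : ∃ a b c : α, a ≠ b ∧ a ≠ c ∧ b ≠ c)
    (hinf : Set.Infinite
      ({w | ¬ ∃ (x p s : List α), x ≠ [] ∧ w = p ++ x ++ x ++ s} : Set (List α))) :
    ¬ Language.IsContextFree
      ({w | ¬ ∃ (x p s : List α), x ≠ [] ∧ w = p ++ x ++ x ++ s} : Language α) :=
  stmt_17_general α hinf
end

section
/- Let g, h : Σ* → Δ* be monoid morphisms with g and h non-erasing, and let w = a_1 z̄_1 a_2 z̄_2 ⋯ a_n z̄_n be a word with a_i ∈ Σ and z_i ∈ Σ* (z̄ denoting the letterwise marked copy over a disjoint barred alphabet). Then w belongs to (u ⧢ ū) for some word u ∈ Σ* if and only if a_1 a_2 ⋯ a_n = z_1 z_2 ⋯ z_n. Consequently, the language { a_1 z̄_1 ⋯ a_n z̄_n : g(a_1⋯a_n) = h(z_1⋯z_n) } meets ⋃_u (u ⧢ ū) if and only if the PCP instance (g,h) has a nonempty solution, i.e., some nonempty x with g(x) = h(x). -/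
/-- `Shuffle u v w` means `w` is an interleaving (shuffle) of `u` and `v`. -/
inductive Shuffle {α : Type*} : List α → List α → List α → Prop
  | nil : Shuffle [] [] []
  | left {a : α} {u v w : List α} : Shuffle u v w → Shuffle (a :: u) v (a :: w)
  | right {a : α} {u v w : List α} : Shuffle u v w → Shuffle u (a :: v) (a :: w)

/-- The word `a₁ z̄₁ a₂ z̄₂ ⋯ aₙ z̄ₙ` over `Σ ⊕ Σ̄` determined by pairs `(aᵢ, zᵢ)`. -/
def mixedWord {σ : Type*} (ps : List (σ × List σ)) : List (σ ⊕ σ) :=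
  (ps.map fun p => Sum.inl p.1 :: p.2.map Sum.inr).flatten

/-
A shuffle of `u` and `ū` is recovered from its letters: its unmarked letters spell `u` and its
marked letters spell `u` again, and conversely every word over `Σ ⊕ Σ̄` is a shuffle of its
unmarked and its marked part. For `a₁ z̄₁ ⋯ aₙ z̄ₙ` these parts are `a₁⋯aₙ` and `z₁⋯zₙ`.
A nonempty PCP solution `x = b₁⋯bₘ` gives the word `b₁ b̄₁ ⋯ bₘ b̄ₘ`.
-/

namespace Shuffle

variable {α β : Type*}

theorem symm {u v w : List α} (s : Shuffle u v w) : Shuffle v u w := by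
  induction s with
  | nil => exact nil
  | left _ ih => exact ih.right
  | right _ ih => exact ih.left

theorem filterMap_eq_left {u v w : List α} (s : Shuffle u v w) {f : α → Option β}
    (hv : ∀ a ∈ v, f a = none) : w.filterMap f = u.filterMap f := by
  induction s with
  | nil => rfl
  | left _ ih => simp only [List.filterMap_cons, ih hv]
  | right _ ih =>
    simp only [List.mem_cons, forall_eq_or_imp] at hv
    simp only [List.filterMap_cons, hv.1, ih hv.2]

theorem filterMap_eq_right {u v w : List α} (s : Shuffle u v w) {f : α → Option β}
    (hu : ∀ a ∈ u, f a = none) : w.filterMap f = v.filterMap f :=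
  s.symm.filterMap_eq_left hu

theorem getLeft_getRight (w : List (α ⊕ β)) :
    Shuffle ((w.filterMap Sum.getLeft?).map Sum.inl)
      ((w.filterMap Sum.getRight?).map Sum.inr) w := by
  induction w with
  | nil => exact nil
  | cons a w ih =>
    cases a with
    | inl a => simpa [List.filterMap_cons] using ih.left
    | inr b => simpa [List.filterMap_cons] using ih.right

end Shuffle

section mixedWord

variable {σ : Type*}

@[simp]
theorem mixedWord_filterMap_getLeft (ps : List (σ × List σ)) :
    (mixedWord ps).filterMap Sum.getLeft? = ps.map Prod.fst := by
  induction ps with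
  | nil => rfl
  | cons p ps ih => simp_all [mixedWord]

@[simp]
theorem mixedWord_filterMap_getRight (ps : List (σ × List σ)) :
    (mixedWord ps).filterMap Sum.getRight? = (ps.map Prod.snd).flatten := by
  induction ps with
  | nil => rfl
  | cons p ps ih =>
    simp_all [mixedWord, List.filterMap_cons, List.filterMap_map, Function.comp_def]

theorem exists_shuffle_mixedWord_iff (ps : List (σ × List σ)) :
    (∃ u : List σ, Shuffle (u.map Sum.inl) (u.map Sum.inr) (mixedWord ps)) ↔
      ps.map Prod.fst = (ps.map Prod.snd).flatten := by
  constructor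
  · rintro ⟨u, s⟩
    have hfst : ps.map Prod.fst = u := by
      simpa [List.filterMap_map, Function.comp_def] using
        s.filterMap_eq_left (f := Sum.getLeft?) (by simp)
    have hsnd : (ps.map Prod.snd).flatten = u := by
      simpa [List.filterMap_map, Function.comp_def] using
        s.filterMap_eq_right (f := Sum.getRight?) (by simp)
    rw [hfst, hsnd]
  · intro hEq
    refine ⟨ps.map Prod.fst, ?_⟩
    simpa [← hEq] using Shuffle.getLeft_getRight (mixedWord ps)

end mixedWord

theorem stmt_19_general {σ Δ : Type*} (g h : List σ → List Δ) :
    (∀ ps : List (σ × List σ),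
      (∃ u : List σ, Shuffle (u.map Sum.inl) (u.map Sum.inr) (mixedWord ps)) ↔
        ps.map Prod.fst = (ps.map Prod.snd).flatten) ∧
    ((∃ ps : List (σ × List σ), ps ≠ [] ∧
        g (ps.map Prod.fst) = h ((ps.map Prod.snd).flatten) ∧
        ∃ u : List σ, Shuffle (u.map Sum.inl) (u.map Sum.inr) (mixedWord ps)) ↔
      ∃ x : List σ, x ≠ [] ∧ g x = h x) := by
  refine ⟨exists_shuffle_mixedWord_iff, ?_⟩
  simp only [exists_shuffle_mixedWord_iff]
  constructor
  · rintro ⟨ps, hne, hgh, hps⟩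
    exact ⟨ps.map Prod.fst, by simpa using hne, by rw [hgh, hps]⟩
  · rintro ⟨x, hne, hgh⟩
    have hfst : (x.map fun a => (a, [a])).map Prod.fst = x := by
      simp [List.map_map, Function.comp_def]
    have hsnd : ((x.map fun a => (a, [a])).map Prod.snd).flatten = x := by
      simp [Function.comp_def, ← List.flatMap_def]
    exact ⟨x.map fun a => (a, [a]), by simpa using hne, by rw [hfst, hsnd, hgh],
      by rw [hfst, hsnd]⟩

/-- A word `a₁ z̄₁ ⋯ aₙ z̄ₙ` lies in `u ⧢ ū` for some `u` iff `a₁⋯aₙ = z₁⋯zₙ`;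
consequently, for non-erasing morphisms `g, h`, the language
`{a₁ z̄₁ ⋯ aₙ z̄ₙ : n ≥ 1, g(a₁⋯aₙ) = h(z₁⋯zₙ)}` meets `⋃_u (u ⧢ ū)` iff
the PCP instance `(g, h)` has a nonempty solution. -/
theorem stmt_19 {σ Δ : Type*} (g h : List σ → List Δ)
    (hg : ∀ x y, g (x ++ y) = g x ++ g y) (hh : ∀ x y, h (x ++ y) = h x ++ h y)
    (hgne : ∀ a : σ, g [a] ≠ []) (hhne : ∀ a : σ, h [a] ≠ []) :
    (∀ ps : List (σ × List σ),
      (∃ u : List σ, Shuffle (u.map Sum.inl) (u.map Sum.inr) (mixedWord ps)) ↔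
        ps.map Prod.fst = (ps.map Prod.snd).flatten) ∧
    ((∃ ps : List (σ × List σ), ps ≠ [] ∧
        g (ps.map Prod.fst) = h ((ps.map Prod.snd).flatten) ∧
        ∃ u : List σ, Shuffle (u.map Sum.inl) (u.map Sum.inr) (mixedWord ps)) ↔
      ∃ x : List σ, x ≠ [] ∧ g x = h x) :=
  stmt_19_general g h
end
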